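/- In L_excore, for pure terms u₁, u₂ : X → P, the equation u₁ ≡ u₂ is T_excore-equivalent to tag ∘ u₁ ≡ tag ∘ u₂ and also to untag ∘ tag ∘ u₁ ≡ untag ∘ tag ∘ u₂. -/
import Mathlib


/-! The decorated logic for the core language for exceptions `L_excore`.
Types are elements of `Ty`, with a distinguished type `Par` of parameters and an
empty type `Emp` (written `0` in the paper); `Sig` is a signature of pure operations.
`tag : Par → Emp` is a propagator and `untag : Emp → Par` is a catcher. -/

inductive CoTm (Ty : Type) (Par Emp : Ty) (Sig : Ty → Ty → Type) : Ty → Ty → Type where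
  | id (X : Ty) : CoTm Ty Par Emp Sig X X
  | comp {X Y Z : Ty} (g : CoTm Ty Par Emp Sig Y Z) (f : CoTm Ty Par Emp Sig X Y) :
      CoTm Ty Par Emp Sig X Z
  | gen {X Y : Ty} (s : Sig X Y) : CoTm Ty Par Emp Sig X Y
  | fromEmpty (Y : Ty) : CoTm Ty Par Emp Sig Emp Y
  | tag : CoTm Ty Par Emp Sig Par Emp
  | untag : CoTm Ty Par Emp Sig Emp Par

variable {Ty : Type} {Par Emp : Ty} {Sig : Ty → Ty → Type}

/-- The pure terms of `L_excore`. -/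
inductive CoPure : ∀ {X Y : Ty}, CoTm Ty Par Emp Sig X Y → Prop where
  | id (X : Ty) : CoPure (CoTm.id X)
  | comp {X Y Z : Ty} {g : CoTm Ty Par Emp Sig Y Z} {f : CoTm Ty Par Emp Sig X Y} :
      CoPure g → CoPure f → CoPure (CoTm.comp g f)
  | gen {X Y : Ty} (s : Sig X Y) : CoPure (CoTm.gen (Par := Par) (Emp := Emp) s)
  | fromEmpty (Y : Ty) : CoPure (CoTm.fromEmpty (Par := Par) (Sig := Sig) Y)

/-- The propagators of `L_excore`: terms not containing `untag`
(all terms are catchers). -/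
inductive CoPpg : ∀ {X Y : Ty}, CoTm Ty Par Emp Sig X Y → Prop where
  | id (X : Ty) : CoPpg (CoTm.id X)
  | comp {X Y Z : Ty} {g : CoTm Ty Par Emp Sig Y Z} {f : CoTm Ty Par Emp Sig X Y} :
      CoPpg g → CoPpg f → CoPpg (CoTm.comp g f)
  | gen {X Y : Ty} (s : Sig X Y) : CoPpg (CoTm.gen (Par := Par) (Emp := Emp) s)
  | fromEmpty (Y : Ty) : CoPpg (CoTm.fromEmpty (Par := Par) (Sig := Sig) Y)
  | tag : CoPpg (CoTm.tag (Sig := Sig))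

/-- A decorated equation of `L_excore`: a pair of parallel terms together with a
`Bool` which is `true` for a strong equation `≡` and `false` for a weak equation `∼`. -/
def CoEqn (Ty : Type) (Par Emp : Ty) (Sig : Ty → Ty → Type) : Type :=
  Σ X : Ty, Σ Y : Ty, (CoTm Ty Par Emp Sig X Y × CoTm Ty Par Emp Sig X Y) × Bool

mutual
/-- Derivable strong equations of `L_excore` from the axiom set `Ax`. -/
inductive CoSEq (Ax : Set (CoEqn Ty Par Emp Sig)) :
    ∀ {X Y : Ty}, CoTm Ty Par Emp Sig X Y → CoTm Ty Par Emp Sig X Y → Prop where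
  | ax {X Y : Ty} {f g : CoTm Ty Par Emp Sig X Y} :
      (⟨X, Y, (f, g), true⟩ : CoEqn Ty Par Emp Sig) ∈ Ax → CoSEq Ax f g
  | refl {X Y : Ty} (f : CoTm Ty Par Emp Sig X Y) : CoSEq Ax f f
  | symm {X Y : Ty} {f g : CoTm Ty Par Emp Sig X Y} : CoSEq Ax f g → CoSEq Ax g f
  | trans {X Y : Ty} {f g h : CoTm Ty Par Emp Sig X Y} :
      CoSEq Ax f g → CoSEq Ax g h → CoSEq Ax f h
  | subs {X Y Z : Ty} (u : CoTm Ty Par Emp Sig X Y) {v₁ v₂ : CoTm Ty Par Emp Sig Y Z} :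
      CoSEq Ax v₁ v₂ → CoSEq Ax (v₁.comp u) (v₂.comp u)
  | repl {X Y Z : Ty} {v₁ v₂ : CoTm Ty Par Emp Sig X Y} (w : CoTm Ty Par Emp Sig Y Z) :
      CoSEq Ax v₁ v₂ → CoSEq Ax (w.comp v₁) (w.comp v₂)
  | idLeft {X Y : Ty} (f : CoTm Ty Par Emp Sig X Y) : CoSEq Ax ((CoTm.id Y).comp f) f
  | idRight {X Y : Ty} (f : CoTm Ty Par Emp Sig X Y) : CoSEq Ax (f.comp (CoTm.id X)) f
  | assoc {W X Y Z : Ty} (h : CoTm Ty Par Emp Sig Y Z) (g : CoTm Ty Par Emp Sig X Y)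
      (f : CoTm Ty Par Emp Sig W X) : CoSEq Ax ((h.comp g).comp f) (h.comp (g.comp f))
  -- (initial) of the pure sublogic `L_eqn`:
  | initialPure {Y : Ty} {u : CoTm Ty Par Emp Sig Emp Y} :
      CoPure u → CoSEq Ax u (CoTm.fromEmpty Y)
  -- (eq₁): a weak equation between propagators is strong
  | eq₁ {X Y : Ty} {f g : CoTm Ty Par Emp Sig X Y} :
      CoPpg f → CoPpg g → CoWEq Ax f g → CoSEq Ax f g
  -- (eq₂)
  | eq₂ {X Y : Ty} {f g : CoTm Ty Par Emp Sig X Y} :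
      CoWEq Ax f g → CoSEq Ax (f.comp (CoTm.fromEmpty X)) (g.comp (CoTm.fromEmpty X)) →
      CoSEq Ax f g
  -- (eq₃)
  | eq₃ {X : Ty} {f g : CoTm Ty Par Emp Sig Emp X} :
      CoWEq Ax (f.comp CoTm.tag) (g.comp CoTm.tag) → CoSEq Ax f g

/-- Derivable weak equations of `L_excore` from the axiom set `Ax`. -/
inductive CoWEq (Ax : Set (CoEqn Ty Par Emp Sig)) :
    ∀ {X Y : Ty}, CoTm Ty Par Emp Sig X Y → CoTm Ty Par Emp Sig X Y → Prop where
  | ax {X Y : Ty} {f g : CoTm Ty Par Emp Sig X Y} :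
      (⟨X, Y, (f, g), false⟩ : CoEqn Ty Par Emp Sig) ∈ Ax → CoWEq Ax f g
  | symm {X Y : Ty} {f g : CoTm Ty Par Emp Sig X Y} : CoWEq Ax f g → CoWEq Ax g f
  | trans {X Y : Ty} {f g h : CoTm Ty Par Emp Sig X Y} :
      CoWEq Ax f g → CoWEq Ax g h → CoWEq Ax f h
  -- (subs_∼): substitution only by pure terms
  | subsPure {X Y Z : Ty} {u : CoTm Ty Par Emp Sig X Y} {v₁ v₂ : CoTm Ty Par Emp Sig Y Z} :
      CoPure u → CoWEq Ax v₁ v₂ → CoWEq Ax (v₁.comp u) (v₂.comp u)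
  -- (repl_∼): replacement by arbitrary terms
  | repl {X Y Z : Ty} {v₁ v₂ : CoTm Ty Par Emp Sig X Y} (w : CoTm Ty Par Emp Sig Y Z) :
      CoWEq Ax v₁ v₂ → CoWEq Ax (w.comp v₁) (w.comp v₂)
  -- (empty_∼)
  | empty {Y : Ty} (f : CoTm Ty Par Emp Sig Emp Y) : CoWEq Ax f (CoTm.fromEmpty Y)
  -- (≡-to-∼)
  | ofStrong {X Y : Ty} {f g : CoTm Ty Par Emp Sig X Y} : CoSEq Ax f g → CoWEq Ax f g
  -- (ax): untag ∘ tag ∼ id_P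
  | untag_tag : CoWEq Ax ((CoTm.untag (Sig := Sig)).comp CoTm.tag) (CoTm.id Par)
end

/-- Two sets of decorated equations are `T_excore`-equivalent over `Ax` when they
generate the same theory (same strong and weak theorems) over `Ax`. -/
def CoEquiv (Ax E₁ E₂ : Set (CoEqn Ty Par Emp Sig)) : Prop :=
  ∀ (X Y : Ty) (f g : CoTm Ty Par Emp Sig X Y),
    (CoSEq (Ax ∪ E₁) f g ↔ CoSEq (Ax ∪ E₂) f g) ∧
    (CoWEq (Ax ∪ E₁) f g ↔ CoWEq (Ax ∪ E₂) f g)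

/-- `Ax` is a pure (strong) theory: all axioms are strong equations between pure terms. -/
def CoPureAx (Ax : Set (CoEqn Ty Par Emp Sig)) : Prop :=
  ∀ e ∈ Ax, CoPure e.2.2.1.1 ∧ CoPure e.2.2.1.2 ∧ e.2.2.2 = true

/-- Axioms of `A` are derivable over `B`. -/
def AxDeriv (A B : Set (CoEqn Ty Par Emp Sig)) : Prop :=
  ∀ (X Y : Ty) (f g : CoTm Ty Par Emp Sig X Y),
    ((⟨X, Y, (f, g), true⟩ : CoEqn Ty Par Emp Sig) ∈ A → CoSEq B f g) ∧
    ((⟨X, Y, (f, g), false⟩ : CoEqn Ty Par Emp Sig) ∈ A → CoWEq B f g)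

theorem seqMono {A B : Set (CoEqn Ty Par Emp Sig)} (h : AxDeriv A B)
    {X Y : Ty} {f g : CoTm Ty Par Emp Sig X Y} (d : CoSEq A f g) : CoSEq B f g :=
  CoSEq.rec (motive_1 := fun {X Y} f g _ => CoSEq B f g)
    (motive_2 := fun {X Y} f g _ => CoWEq B f g)
    (fun m => (h _ _ _ _).1 m)
    (fun f => .refl f)
    (fun _ ih => .symm ih)
    (fun _ _ ih₁ ih₂ => .trans ih₁ ih₂)
    (fun u => fun _ ih => .subs u ih)
    (fun w _ ih => .repl w ih)
    (fun f => .idLeft f)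
    (fun f => .idRight f)
    (fun a b c => .assoc a b c)
    (fun p => .initialPure p)
    (fun p q _ ih => .eq₁ p q ih)
    (fun _ _ ih₁ ih₂ => .eq₂ ih₁ ih₂)
    (fun _ ih => .eq₃ ih)
    (fun m => (h _ _ _ _).2 m)
    (fun _ ih => .symm ih)
    (fun _ _ ih₁ ih₂ => .trans ih₁ ih₂)
    (fun p _ ih => .subsPure p ih)
    (fun w _ ih => .repl w ih)
    (fun f => .empty f)
    (fun _ ih => .ofStrong ih)
    .untag_tag
    d

theorem weqMono {A B : Set (CoEqn Ty Par Emp Sig)} (h : AxDeriv A B)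
    {X Y : Ty} {f g : CoTm Ty Par Emp Sig X Y} (d : CoWEq A f g) : CoWEq B f g :=
  CoWEq.rec (motive_1 := fun {X Y} f g _ => CoSEq B f g)
    (motive_2 := fun {X Y} f g _ => CoWEq B f g)
    (fun m => (h _ _ _ _).1 m)
    (fun f => .refl f)
    (fun _ ih => .symm ih)
    (fun _ _ ih₁ ih₂ => .trans ih₁ ih₂)
    (fun u => fun _ ih => .subs u ih)
    (fun w _ ih => .repl w ih)
    (fun f => .idLeft f)
    (fun f => .idRight f)
    (fun a b c => .assoc a b c)
    (fun p => .initialPure p)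
    (fun p q _ ih => .eq₁ p q ih)
    (fun _ _ ih₁ ih₂ => .eq₂ ih₁ ih₂)
    (fun _ ih => .eq₃ ih)
    (fun m => (h _ _ _ _).2 m)
    (fun _ ih => .symm ih)
    (fun _ _ ih₁ ih₂ => .trans ih₁ ih₂)
    (fun p _ ih => .subsPure p ih)
    (fun w _ ih => .repl w ih)
    (fun f => .empty f)
    (fun _ ih => .ofStrong ih)
    .untag_tag
    d

theorem coEquiv_of_axDeriv {Ax E₁ E₂ : Set (CoEqn Ty Par Emp Sig)}
    (h₁ : AxDeriv (Ax ∪ E₁) (Ax ∪ E₂)) (h₂ : AxDeriv (Ax ∪ E₂) (Ax ∪ E₁)) :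
    CoEquiv Ax E₁ E₂ := fun X Y f g =>
  ⟨⟨seqMono h₁, seqMono h₂⟩, ⟨weqMono h₁, weqMono h₂⟩⟩

theorem copure_ppg {X Y : Ty} {f : CoTm Ty Par Emp Sig X Y} (h : CoPure f) : CoPpg f := by
  induction h with
  | id X => exact .id X
  | comp _ _ ihg ihf => exact .comp ihg ihf
  | gen s => exact .gen s
  | fromEmpty Y => exact .fromEmpty Y

/-- `u ∼ untag ∘ (tag ∘ u)` for pure `u`. -/
theorem weq_untag_tag_comp {B : Set (CoEqn Ty Par Emp Sig)}
    {X : Ty} {u : CoTm Ty Par Emp Sig X Par} (hu : CoPure u) :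
    CoWEq B u (CoTm.untag.comp (CoTm.tag.comp u)) := by
  have h1 : CoWEq B ((CoTm.untag.comp CoTm.tag).comp u) ((CoTm.id Par).comp u) :=
    CoWEq.subsPure hu CoWEq.untag_tag
  have h2 : CoWEq B ((CoTm.id Par).comp u) u := .ofStrong (.idLeft u)
  have h3 : CoWEq B ((CoTm.untag.comp CoTm.tag).comp u)
      (CoTm.untag.comp (CoTm.tag.comp u)) := .ofStrong (.assoc _ _ _)
  exact .trans (.symm (.trans h1 h2)) h3

/-- From `untag∘(tag∘u₁) ≡ untag∘(tag∘u₂)` derive `u₁ ≡ u₂` for pure `u₁ u₂`. -/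
theorem seq_of_untag_tag {B : Set (CoEqn Ty Par Emp Sig)}
    {X : Ty} {u₁ u₂ : CoTm Ty Par Emp Sig X Par} (hu₁ : CoPure u₁) (hu₂ : CoPure u₂)
    (h : CoSEq B (CoTm.untag.comp (CoTm.tag.comp u₁))
      (CoTm.untag.comp (CoTm.tag.comp u₂))) : CoSEq B u₁ u₂ := by
  have w : CoWEq B u₁ u₂ :=
    .trans (weq_untag_tag_comp hu₁)
      (.trans (.ofStrong h) (.symm (weq_untag_tag_comp hu₂)))
  exact .eq₁ (copure_ppg hu₁) (copure_ppg hu₂) w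

/-- In `L_excore`, for pure `u₁ u₂ : X → P`, the equation `u₁ ≡ u₂` is
`T_excore`-equivalent to `tag ∘ u₁ ≡ tag ∘ u₂` and also to
`untag ∘ tag ∘ u₁ ≡ untag ∘ tag ∘ u₂`. -/
theorem coexc_pure_eq_iff_tag_eq (Ax : Set (CoEqn Ty Par Emp Sig)) (hAx : CoPureAx Ax)
    {X : Ty} (u₁ u₂ : CoTm Ty Par Emp Sig X Par) (hu₁ : CoPure u₁) (hu₂ : CoPure u₂) :
    CoEquiv Ax {(⟨X, Par, (u₁, u₂), true⟩ : CoEqn Ty Par Emp Sig)}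
      {(⟨X, Emp, (CoTm.tag.comp u₁, CoTm.tag.comp u₂), true⟩ : CoEqn Ty Par Emp Sig)} ∧
    CoEquiv Ax {(⟨X, Par, (u₁, u₂), true⟩ : CoEqn Ty Par Emp Sig)}
      {(⟨X, Par, (CoTm.untag.comp (CoTm.tag.comp u₁),
                  CoTm.untag.comp (CoTm.tag.comp u₂)), true⟩ : CoEqn Ty Par Emp Sig)} := by
  -- derivability of the base equation in each theory
  set e₁ : CoEqn Ty Par Emp Sig := ⟨X, Par, (u₁, u₂), true⟩ with he₁
  set e₂ : CoEqn Ty Par Emp Sig :=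
    ⟨X, Emp, (CoTm.tag.comp u₁, CoTm.tag.comp u₂), true⟩ with he₂
  set e₃ : CoEqn Ty Par Emp Sig :=
    ⟨X, Par, (CoTm.untag.comp (CoTm.tag.comp u₁),
              CoTm.untag.comp (CoTm.tag.comp u₂)), true⟩ with he₃
  have base₁ : CoSEq (Ax ∪ {e₁}) u₁ u₂ := .ax (Or.inr rfl)
  have base₂ : CoSEq (Ax ∪ {e₂}) (CoTm.tag.comp u₁) (CoTm.tag.comp u₂) := .ax (Or.inr rfl)
  have base₃ : CoSEq (Ax ∪ {e₃}) (CoTm.untag.comp (CoTm.tag.comp u₁))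
      (CoTm.untag.comp (CoTm.tag.comp u₂)) := .ax (Or.inr rfl)
  -- in each theory, the base equation of the others is derivable
  have d₁₂ : CoSEq (Ax ∪ {e₂}) u₁ u₂ := seq_of_untag_tag hu₁ hu₂ (.repl _ base₂)
  have d₁₃ : CoSEq (Ax ∪ {e₃}) u₁ u₂ := seq_of_untag_tag hu₁ hu₂ base₃
  have d₂₁ : CoSEq (Ax ∪ {e₁}) (CoTm.tag.comp u₁) (CoTm.tag.comp u₂) := .repl _ base₁
  have d₃₁ : CoSEq (Ax ∪ {e₁}) (CoTm.untag.comp (CoTm.tag.comp u₁))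
      (CoTm.untag.comp (CoTm.tag.comp u₂)) := .repl _ (.repl _ base₁)
  -- generic axiom-derivability argument
  have key : ∀ (E : Set (CoEqn Ty Par Emp Sig)) (e : CoEqn Ty Par Emp Sig),
      CoSEq (Ax ∪ E) e.2.2.1.1 e.2.2.1.2 → e.2.2.2 = true →
      AxDeriv (Ax ∪ {e}) (Ax ∪ E) := by
    intro E e hd hb X' Y' f g
    constructor
    · rintro (m | rfl)
      · exact .ax (Or.inl m)
      · exact hd
    · rintro (m | rfl)
      · exact .ax (Or.inl m)
      · exact absurd hb (by simp)
  constructor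
  · exact coEquiv_of_axDeriv (key {e₂} e₁ d₁₂ rfl) (key {e₁} e₂ d₂₁ rfl)
  · exact coEquiv_of_axDeriv (key {e₃} e₁ d₁₃ rfl) (key {e₁} e₃ d₃₁ rfl)
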